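/- arXiv:2510.03268 — 2 statements merged into one kernel-verified Lean document; each statement's English description precedes it below -/
import Mathlib

section
/- For every ν > 0 and all real numbers 0 < a < b, one has log(I_ν(a)/I_ν(b)) > ν·log(a/b) + (a − b). -/
/-- The modified Bessel function of the first kind of order `ν`. -/
noncomputable def besselI (ν m : ℝ) : ℝ :=
  ∑' k : ℕ, (1 / ((Nat.factorial k : ℝ) * Real.Gamma (ν + k + 1))) *
    (m / 2) ^ (2 * (k : ℝ) + ν)

/-!
Write `I_ν(x) = (x/2)^ν F(x/2)` with `F(y) = ∑ cₖ y^(2k)`, `cₖ = 1 / (k! Γ(ν + k + 1))`.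
The claim is that `log I_ν(x) - ν log x - x` decreases, i.e. that `e^(-2y) F(y)`
decreases, i.e. that `F' < 2F`. Termwise AM-GM gives
`2(k+1) cₖ₊₁ y^(2k+1) ≤ (k+1)² cₖ₊₁ y^(2k) + cₖ₊₁ y^(2k+2)`,
and the Gamma recurrence gives `(k+1)² cₖ₊₁ ≤ cₖ` when `ν ≥ 0`.
Summing, `F' ≤ F + (F - c₀) < 2F`.
-/

open Real Set
open scoped Nat

section EvenSeries

variable {c : ℕ → ℝ}

noncomputable def evenSeries (c : ℕ → ℝ) (y : ℝ) : ℝ := ∑' k, c k * y ^ (2 * k)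

noncomputable def evenSeriesDeriv (c : ℕ → ℝ) (y : ℝ) : ℝ :=
  ∑' k, c k * (2 * k * y ^ (2 * k - 1))

theorem factorial_mul_le_of_sq_mul_succ_le (hc : ∀ k, 0 ≤ c k)
    (hrec : ∀ k : ℕ, ((k : ℝ) + 1) ^ 2 * c (k + 1) ≤ c k) (k : ℕ) :
    k ! * c k ≤ c 0 := by
  induction k with
  | zero => simp
  | succ k ih =>
    have hsucc : ((k : ℝ) + 1) * c (k + 1) ≤ ((k : ℝ) + 1) ^ 2 * c (k + 1) :=
      mul_le_mul_of_nonneg_right (le_self_pow₀ (by simp) two_ne_zero) (hc (k + 1))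
    calc ((k + 1)! : ℝ) * c (k + 1) = k ! * (((k : ℝ) + 1) * c (k + 1)) := by
          push_cast [Nat.factorial_succ]; ring
      _ ≤ k ! * c k := by gcongr; exact hsucc.trans (hrec k)
      _ ≤ c 0 := ih

theorem natCast_mul_factorial_mul_le_of_sq_mul_succ_le (hc : ∀ k, 0 ≤ c k)
    (hrec : ∀ k : ℕ, ((k : ℝ) + 1) ^ 2 * c (k + 1) ≤ c k) (k : ℕ) :
    k * (k ! * c k) ≤ c 0 := by
  cases k with
  | zero => simpa using hc 0
  | succ k =>
    calc ((k + 1 : ℕ) : ℝ) * ((k + 1)! * c (k + 1))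
          = k ! * (((k : ℝ) + 1) ^ 2 * c (k + 1)) := by
          push_cast [Nat.factorial_succ]; ring
      _ ≤ k ! * c k := by gcongr; exact hrec k
      _ ≤ c 0 := factorial_mul_le_of_sq_mul_succ_le hc hrec k

theorem summable_evenSeries (hc : ∀ k, 0 ≤ c k)
    (hrec : ∀ k : ℕ, ((k : ℝ) + 1) ^ 2 * c (k + 1) ≤ c k) (y : ℝ) :
    Summable fun k => c k * y ^ (2 * k) := by
  refine .of_nonneg_of_le (fun k => ?_) (fun k => ?_)
    ((Real.summable_pow_div_factorial (y ^ 2)).mul_left (c 0))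
  · have := hc k
    rw [pow_mul]; positivity
  · have hk := factorial_mul_le_of_sq_mul_succ_le hc hrec k
    rw [pow_mul, mul_div_assoc', le_div_iff₀ (by positivity)]
    calc c k * (y ^ 2) ^ k * k ! = (k ! * c k) * (y ^ 2) ^ k := by ring
      _ ≤ c 0 * (y ^ 2) ^ k := by gcongr

theorem norm_evenSeriesDeriv_term_le (hc : ∀ k, 0 ≤ c k)
    (hrec : ∀ k : ℕ, ((k : ℝ) + 1) ^ 2 * c (k + 1) ≤ c k) {y R : ℝ} (hyR : |y| ≤ R)
    (hR : 1 ≤ R) (k : ℕ) :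
    ‖c k * (2 * k * y ^ (2 * k - 1))‖ ≤ 2 * c 0 * ((R ^ 2) ^ k / k !) := by
  have hck := hc k
  have hk := natCast_mul_factorial_mul_le_of_sq_mul_succ_le hc hrec k
  rw [Real.norm_eq_abs, abs_mul, abs_mul, abs_pow, abs_of_nonneg hck,
    abs_of_nonneg (by positivity : (0 : ℝ) ≤ 2 * k)]
  calc c k * (2 * k * |y| ^ (2 * k - 1)) ≤ c k * (2 * k * R ^ (2 * k)) := by
        gcongr
        exact (pow_le_pow_left₀ (abs_nonneg y) hyR _).trans
          (pow_le_pow_right₀ hR (Nat.sub_le _ _))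
    _ = 2 * (k * (k ! * c k)) * ((R ^ 2) ^ k / k !) := by
        rw [pow_mul]; field_simp
    _ ≤ 2 * c 0 * ((R ^ 2) ^ k / k !) := by gcongr

theorem summable_evenSeriesDeriv (hc : ∀ k, 0 ≤ c k)
    (hrec : ∀ k : ℕ, ((k : ℝ) + 1) ^ 2 * c (k + 1) ≤ c k) (y : ℝ) :
    Summable fun k => c k * (2 * k * y ^ (2 * k - 1)) :=
  .of_norm_bounded ((Real.summable_pow_div_factorial _).mul_left (2 * c 0))
    (norm_evenSeriesDeriv_term_le hc hrec (le_max_right 1 |y|) (le_max_left 1 |y|))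

theorem hasDerivAt_evenSeries (hc : ∀ k, 0 ≤ c k)
    (hrec : ∀ k : ℕ, ((k : ℝ) + 1) ^ 2 * c (k + 1) ≤ c k) (y : ℝ) :
    HasDerivAt (evenSeries c) (evenSeriesDeriv c y) y := by
  set R := |y| + 1
  have hR : 1 ≤ R := le_add_of_nonneg_left (abs_nonneg y)
  have hy : y ∈ Ioo (-R) R := abs_lt.mp (lt_add_one |y|)
  refine hasDerivAt_tsum_of_isPreconnected
    ((Real.summable_pow_div_factorial (R ^ 2)).mul_left (2 * c 0)) isOpen_Ioo
    isPreconnected_Ioo (fun k z _ => ?_)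
    (fun k z hz => norm_evenSeriesDeriv_term_le hc hrec (abs_lt.mpr hz).le hR k)
    (y₀ := 0) ⟨by linarith, by linarith⟩ (summable_evenSeries hc hrec 0) hy
  exact ((hasDerivAt_pow (2 * k) z).const_mul (c k)).congr_deriv (by push_cast; ring)

theorem evenSeries_pos (hc : ∀ k, 0 ≤ c k)
    (hrec : ∀ k : ℕ, ((k : ℝ) + 1) ^ 2 * c (k + 1) ≤ c k) (h0 : 0 < c 0) (y : ℝ) :
    0 < evenSeries c y :=
  (summable_evenSeries hc hrec y).tsum_pos
    (fun k => mul_nonneg (hc k) (by rw [pow_mul]; positivity)) 0 (by simpa using h0)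

theorem evenSeriesDeriv_lt_two_mul (hc : ∀ k, 0 ≤ c k)
    (hrec : ∀ k : ℕ, ((k : ℝ) + 1) ^ 2 * c (k + 1) ≤ c k) (h0 : 0 < c 0) (y : ℝ) :
    evenSeriesDeriv c y < 2 * evenSeries c y := by
  have hS := summable_evenSeries hc hrec y
  have hD := summable_evenSeriesDeriv hc hrec y
  set P := fun j : ℕ => ((j : ℝ) + 1) ^ 2 * c (j + 1) * y ^ (2 * j)
  set Q := fun j : ℕ => c (j + 1) * y ^ (2 * (j + 1))
  have hPS : ∀ j, P j ≤ c j * y ^ (2 * j) := fun j =>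
    mul_le_mul_of_nonneg_right (hrec j) (by rw [pow_mul]; positivity)
  have hP : Summable P := .of_nonneg_of_le
    (fun j => mul_nonneg (mul_nonneg (sq_nonneg _) (hc _)) (by rw [pow_mul]; positivity)) hPS hS
  have hQ : Summable Q := (summable_nat_add_iff 1).2 hS
  have amgm : ∀ j : ℕ,
      c (j + 1) * (2 * ((j + 1 : ℕ) : ℝ) * y ^ (2 * (j + 1) - 1)) ≤ P j + Q j := by
    intro j
    have e : 2 * (j + 1) - 1 = 2 * j + 1 := by omega
    rw [e]
    simp only [P, Q, mul_add, pow_add, pow_mul', pow_one, mul_one]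
    push_cast
    nlinarith [mul_nonneg (hc (j + 1)) (sq_nonneg (((j : ℝ) + 1) * y ^ j - y ^ j * y))]
  have hQS : ∑' j, Q j = evenSeries c y - c 0 := by
    rw [evenSeries, hS.tsum_eq_zero_add]; simp [Q]
  calc evenSeriesDeriv c y
        = ∑' j : ℕ, c (j + 1) * (2 * ((j + 1 : ℕ) : ℝ) * y ^ (2 * (j + 1) - 1)) := by
        rw [evenSeriesDeriv, hD.tsum_eq_zero_add]; simp
    _ ≤ ∑' j, (P j + Q j) :=
        Summable.tsum_le_tsum amgm ((summable_nat_add_iff 1).2 hD) (hP.add hQ)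
    _ = ∑' j, P j + ∑' j, Q j := hP.tsum_add hQ
    _ ≤ evenSeries c y + (evenSeries c y - c 0) := by
        rw [hQS]; gcongr; exact hP.tsum_le_tsum hPS hS
    _ < 2 * evenSeries c y := by linarith

theorem strictAnti_exp_neg_two_mul_mul_evenSeries (hc : ∀ k, 0 ≤ c k)
    (hrec : ∀ k : ℕ, ((k : ℝ) + 1) ^ 2 * c (k + 1) ≤ c k) (h0 : 0 < c 0) :
    StrictAnti fun y => exp (-(2 * y)) * evenSeries c y := by
  refine strictAnti_of_hasDerivAt_neg
    (f' := fun y => exp (-(2 * y)) * (evenSeriesDeriv c y - 2 * evenSeries c y))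
    (fun y => ?_) (fun y => ?_)
  · exact (((hasDerivAt_id y).const_mul 2).neg.exp.mul
      (hasDerivAt_evenSeries hc hrec y)).congr_deriv (by simp only [id_eq, Pi.neg_apply, mul_one, mul_neg, neg_mul]; ring)
  · exact mul_neg_of_pos_of_neg (exp_pos _)
      (sub_neg.mpr (evenSeriesDeriv_lt_two_mul hc hrec h0 y))

end EvenSeries

noncomputable def besselCoeff (ν : ℝ) (k : ℕ) : ℝ := 1 / (k ! * Gamma (ν + k + 1))

section BesselCoeff

variable {ν : ℝ}

theorem besselCoeff_pos (hν : -1 < ν) (k : ℕ) : 0 < besselCoeff ν k := by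
  have := Gamma_pos_of_pos (by linarith [(k.cast_nonneg : (0 : ℝ) ≤ k)] : 0 < ν + k + 1)
  unfold besselCoeff; positivity

theorem besselCoeff_eq_mul_besselCoeff_succ (hν : -1 < ν) (k : ℕ) :
    besselCoeff ν k = (k + 1) * (ν + k + 1) * besselCoeff ν (k + 1) := by
  have hs : 0 < ν + k + 1 := by linarith [(k.cast_nonneg : (0 : ℝ) ≤ k)]
  have := Gamma_pos_of_pos hs
  simp only [besselCoeff, Nat.factorial_succ]
  push_cast
  rw [show ν + (k + 1) + 1 = (ν + k + 1) + 1 by ring, Gamma_add_one hs.ne']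
  field_simp

theorem sq_mul_besselCoeff_succ_le (hν : 0 ≤ ν) (k : ℕ) :
    ((k : ℝ) + 1) ^ 2 * besselCoeff ν (k + 1) ≤ besselCoeff ν k := by
  rw [besselCoeff_eq_mul_besselCoeff_succ (by linarith) k, sq]
  gcongr
  · exact (besselCoeff_pos (by linarith) _).le
  · linarith

theorem evenSeries_besselCoeff_pos (hν : 0 ≤ ν) (y : ℝ) : 0 < evenSeries (besselCoeff ν) y :=
  evenSeries_pos (fun k => (besselCoeff_pos (by linarith) k).le) (sq_mul_besselCoeff_succ_le hν)
    (besselCoeff_pos (by linarith) 0) y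

theorem strictAnti_exp_neg_two_mul_mul_evenSeries_besselCoeff (hν : 0 ≤ ν) :
    StrictAnti fun y => exp (-(2 * y)) * evenSeries (besselCoeff ν) y :=
  strictAnti_exp_neg_two_mul_mul_evenSeries (fun k => (besselCoeff_pos (by linarith) k).le)
    (sq_mul_besselCoeff_succ_le hν) (besselCoeff_pos (by linarith) 0)

end BesselCoeff

theorem besselI_eq_rpow_mul_evenSeries (ν : ℝ) {x : ℝ} (hx : 0 < x) :
    besselI ν x = (x / 2) ^ ν * evenSeries (besselCoeff ν) (x / 2) := by
  rw [besselI, evenSeries, ← tsum_mul_left]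
  refine tsum_congr fun k => ?_
  rw [rpow_add (by positivity), show 2 * (k : ℝ) = ((2 * k : ℕ) : ℝ) by push_cast; ring,
    rpow_natCast, besselCoeff]
  ring

theorem besselI_pos {ν : ℝ} (hν : 0 ≤ ν) {x : ℝ} (hx : 0 < x) : 0 < besselI ν x := by
  have := evenSeries_besselCoeff_pos hν (x / 2)
  rw [besselI_eq_rpow_mul_evenSeries ν hx]
  positivity

theorem strictAntiOn_log_besselI_sub {ν : ℝ} (hν : 0 ≤ ν) :
    StrictAntiOn (fun x => log (besselI ν x) - ν * log x - x) (Ioi 0) := by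
  have hL : ∀ x : ℝ, 0 < x → log (besselI ν x) - ν * log x - x
      = log (exp (-(2 * (x / 2))) * evenSeries (besselCoeff ν) (x / 2)) - ν * log 2 := by
    intro x hx
    have hS := evenSeries_besselCoeff_pos hν (x / 2)
    rw [besselI_eq_rpow_mul_evenSeries ν hx, log_mul (by positivity) hS.ne',
      log_mul (exp_pos _).ne' hS.ne', log_exp, log_rpow (by positivity),
      log_div hx.ne' two_ne_zero]
    ring
  intro a ha b hb hab
  dsimp only
  rw [hL a ha, hL b hb]
  gcongr ?_ - _
  exact log_lt_log (mul_pos (exp_pos _) (evenSeries_besselCoeff_pos hν _))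
    (strictAnti_exp_neg_two_mul_mul_evenSeries_besselCoeff hν (by linarith))

theorem besselI_log_ratio_gt (ν a b : ℝ) (hν : 0 < ν) (ha : 0 < a) (hab : a < b) :
    Real.log (besselI ν a / besselI ν b) > ν * Real.log (a / b) + (a - b) := by
  have hb : 0 < b := ha.trans hab
  have hL := strictAntiOn_log_besselI_sub hν.le ha hb hab
  dsimp only at hL
  rw [log_div (besselI_pos hν.le ha).ne' (besselI_pos hν.le hb).ne', log_div ha.ne' hb.ne']
  linarith
end

section
/- Let κ, ν, τ > 0 and define M(w) = √(κ² + 2κw/τ + 1/τ²) and J(w) = −w/τ + log(I_ν(M(w))/M(w)^ν) − log(I_ν(κ)/κ^ν) for w ∈ [−1, 1]. Then for every w with 0 < w ≤ 1, J(w) < J(−w). -/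
/-- `M κ τ w = √(κ² + 2κw/τ + 1/τ²)`. -/
noncomputable def Mfun (κ τ w : ℝ) : ℝ :=
  Real.sqrt (κ ^ 2 + 2 * κ * w / τ + 1 / τ ^ 2)

/-- The convergence function `J`. -/
noncomputable def Jfun (κ ν τ w : ℝ) : ℝ :=
  -w / τ + Real.log (besselI ν (Mfun κ τ w) / (Mfun κ τ w) ^ ν) -
    Real.log (besselI ν κ / κ ^ ν)

/-!
Write `B = M(w)` and `A = M(-w)`. Then
`J(-w) - J(w) = 2w/τ - (log (I_ν(B)/B^ν) - log (I_ν(A)/A^ν))`.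

Geometry: `A ≥ κ - w/τ` and `B ≥ κ + w/τ`, so `A + B ≥ 2κ`; as `B² - A² = 4κw/τ`,
this gives `B - A ≤ 2w/τ`.

Analysis: `I_ν(m)/m^ν = 2^(-ν) S(m²)` with `S(t) = ∑ t^k / (4^k k! Γ(ν+k+1))`. The coefficients of
`S` divided by those of `cosh m = ∑ (m²)^k/(2k)!` decrease, so a Chebyshev-type symmetrisation of
the double series gives `S(B²) cosh A ≤ S(A²) cosh B`. With `cosh B < cosh A · e^(B-A)` this yields
`log S(B²) - log S(A²) < B - A ≤ 2w/τ`.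

When `A = 0` the term `log (I_ν(A)/A^ν)` is the junk value `0`, and the estimate above needs
`2^ν Γ(ν+1) > 1`; this follows from the convexity of `log Γ` and `Γ'(1) = -γ > -log 2`.
-/

open Real
open scoped Nat

lemma pow_mul_pow_le_pow_mul_pow {x y : ℝ} (hx : 0 ≤ x) (hxy : x ≤ y) {k l : ℕ} (hkl : k ≤ l) :
    y ^ k * x ^ l ≤ x ^ k * y ^ l := by
  obtain ⟨d, rfl⟩ := Nat.exists_eq_add_of_le hkl
  have hy : 0 ≤ y := hx.trans hxy
  have hd : x ^ d ≤ y ^ d := pow_le_pow_left₀ hx hxy d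
  calc y ^ k * x ^ (k + d) = x ^ k * y ^ k * x ^ d := by ring
    _ ≤ x ^ k * y ^ k * y ^ d := by gcongr
    _ = x ^ k * y ^ (k + d) := by ring

lemma tsum_nonneg_of_add_swap_nonneg {α : Type*} {F : α × α → ℝ} (hF : Summable F)
    (h : ∀ p : α × α, 0 ≤ F p + F p.swap) : 0 ≤ ∑' p, F p := by
  have hswap : ∑' p : α × α, F p.swap = ∑' p, F p := (Equiv.prodComm α α).tsum_eq F
  have hsum : ∑' p : α × α, (F p + F p.swap) = 2 * ∑' p, F p := by
    rw [hF.tsum_add (g := fun p : α × α => F p.swap) (hF.comp_injective Prod.swap_injective),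
      hswap, two_mul]
  have hnonneg : 0 ≤ ∑' p : α × α, (F p + F p.swap) := tsum_nonneg h
  linarith

theorem tsum_mul_pow_mul_tsum_le_of_antitone_div {a c : ℕ → ℝ} (ha : ∀ k, 0 ≤ a k)
    (hc : ∀ k, 0 < c k) (hac : Antitone fun k => a k / c k) {x y : ℝ} (hx : 0 ≤ x)
    (hxy : x ≤ y) (hay : Summable fun k => a k * y ^ k) (hcy : Summable fun k => c k * y ^ k) :
    (∑' k, a k * y ^ k) * ∑' k, c k * x ^ k ≤ (∑' k, a k * x ^ k) * ∑' k, c k * y ^ k := by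
  have hy : 0 ≤ y := hx.trans hxy
  have nonneg {b : ℕ → ℝ} (hb : ∀ k, 0 ≤ b k) (z : ℝ) (hz : 0 ≤ z) : 0 ≤ fun k => b k * z ^ k :=
    fun k => mul_nonneg (hb k) (pow_nonneg hz k)
  have at_x {b : ℕ → ℝ} (hb : ∀ k, 0 ≤ b k) (hby : Summable fun k => b k * y ^ k) :
      Summable fun k => b k * x ^ k :=
    hby.of_nonneg_of_le (nonneg hb x hx) fun k => by gcongr; exact hb k
  have hc' : ∀ k, 0 ≤ c k := fun k => (hc k).le
  have hax := at_x ha hay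
  have hcx := at_x hc' hcy
  have hxy' := Summable.mul_of_nonneg hax hcy (nonneg ha x hx) (nonneg hc' y hy)
  have hyx' := Summable.mul_of_nonneg hay hcx (nonneg ha y hy) (nonneg hc' x hx)
  rw [← sub_nonneg, hax.tsum_mul_tsum hcy hxy', hay.tsum_mul_tsum hcx hyx',
    ← hxy'.tsum_sub hyx']
  refine tsum_nonneg_of_add_swap_nonneg (hxy'.sub hyx') fun ⟨k, l⟩ => ?_
  -- the symmetrized term factors as (a k c l - a l c k) (x^k y^l - y^k x^l)
  have key {k l : ℕ} (hkl : k ≤ l) :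
      0 ≤ (a k * c l - a l * c k) * (x ^ k * y ^ l - y ^ k * x ^ l) := by
    have hcross : a l * c k ≤ a k * c l := by
      have := hac hkl
      rwa [div_le_div_iff₀ (hc l) (hc k)] at this
    exact mul_nonneg (sub_nonneg.2 hcross) (sub_nonneg.2 (pow_mul_pow_le_pow_mul_pow hx hxy hkl))
  dsimp only [Prod.swap_prod_mk]
  rcases le_total k l with hkl | hlk
  · linear_combination key hkl
  · linear_combination key hlk

lemma neg_mul_log_two_lt_log_Gamma_add_one {ν : ℝ} (hν : 0 < ν) :
    -(ν * log 2) < log (Gamma (ν + 1)) := by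
  have hderiv : HasDerivAt (fun s => log (Gamma s)) (-eulerMascheroniConstant) 1 := by
    simpa using hasDerivAt_Gamma_one.log (by simp)
  have hslope := convexOn_log_Gamma.le_slope_of_hasDerivAt (Set.mem_Ioi.2 one_pos)
    (Set.mem_Ioi.2 (by linarith : (0 : ℝ) < 1 + ν)) (by linarith) hderiv
  rw [slope_def_field, Function.comp_apply, Function.comp_apply, Gamma_one, log_one,
    add_sub_cancel_left, sub_zero, le_div_iff₀ hν, add_comm] at hslope
  have hγ : eulerMascheroniConstant < log 2 :=
    eulerMascheroniConstant_lt_two_thirds.trans (lt_of_lt_of_le' log_two_gt_d9 (by norm_num))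
  nlinarith

noncomputable def besselSeriesCoeff (ν : ℝ) (k : ℕ) : ℝ :=
  ((4 : ℝ) ^ k * k ! * Gamma (ν + k + 1))⁻¹

noncomputable def besselSeries (ν t : ℝ) : ℝ :=
  ∑' k : ℕ, besselSeriesCoeff ν k * t ^ k

lemma Gamma_add_natCast_add_one_pos {ν : ℝ} (hν : -1 < ν) (k : ℕ) : 0 < Gamma (ν + k + 1) :=
  Gamma_pos_of_pos (by linarith [k.cast_nonneg (α := ℝ)])

lemma Gamma_add_natCast_succ_add_one {ν : ℝ} (hν : -1 < ν) (k : ℕ) :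
    Gamma (ν + ↑(k + 1) + 1) = (ν + k + 1) * Gamma (ν + k + 1) := by
  rw [← Gamma_add_one (by linarith [k.cast_nonneg (α := ℝ)])]
  push_cast
  congr 1
  ring

lemma besselSeriesCoeff_pos {ν : ℝ} (hν : -1 < ν) (k : ℕ) : 0 < besselSeriesCoeff ν k := by
  have := Gamma_add_natCast_add_one_pos hν k
  unfold besselSeriesCoeff
  positivity

lemma besselSeriesCoeff_succ {ν : ℝ} (hν : -1 < ν) (k : ℕ) :
    besselSeriesCoeff ν (k + 1) = besselSeriesCoeff ν k / (4 * (k + 1) * (ν + k + 1)) := by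
  simp only [besselSeriesCoeff, Gamma_add_natCast_succ_add_one hν, Nat.factorial_succ, pow_succ]
  push_cast
  rw [div_eq_mul_inv, ← mul_inv]
  ring

lemma factorial_mul_Gamma_le {ν : ℝ} (hν : 0 ≤ ν) (k : ℕ) :
    k ! * Gamma (ν + 1) ≤ Gamma (ν + k + 1) := by
  induction k with
  | zero => simp
  | succ k ih =>
    rw [Gamma_add_natCast_succ_add_one (by linarith), Nat.factorial_succ, Nat.cast_mul,
      Nat.cast_add_one, mul_assoc]
    gcongr
    linarith

lemma summable_besselSeries {ν : ℝ} (hν : 0 ≤ ν) (t : ℝ) :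
    Summable fun k => besselSeriesCoeff ν k * t ^ k := by
  have hΓ : 0 < Gamma (ν + 1) := Gamma_pos_of_pos (by positivity)
  refine .of_norm_bounded ((Real.summable_pow_div_factorial |t|).mul_left (Gamma (ν + 1))⁻¹)
    fun k => ?_
  have hcoeff : besselSeriesCoeff ν k ≤ (k ! * Gamma (ν + 1))⁻¹ := by
    refine inv_anti₀ (by positivity) ?_
    have : 1 ≤ (4 : ℝ) ^ k * k ! := one_le_mul_of_one_le_of_one_le (one_le_pow₀ (by norm_num))
      (mod_cast Nat.one_le_iff_ne_zero.2 (Nat.factorial_ne_zero k))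
    calc (k ! : ℝ) * Gamma (ν + 1) ≤ Gamma (ν + k + 1) := factorial_mul_Gamma_le hν k
      _ ≤ 4 ^ k * k ! * Gamma (ν + k + 1) :=
        le_mul_of_one_le_left (Gamma_add_natCast_add_one_pos (by linarith) k).le this
  rw [norm_mul, norm_pow, Real.norm_eq_abs, Real.norm_eq_abs,
    abs_of_pos (besselSeriesCoeff_pos (by linarith) k)]
  calc besselSeriesCoeff ν k * |t| ^ k ≤ (k ! * Gamma (ν + 1))⁻¹ * |t| ^ k := by gcongr
    _ = (Gamma (ν + 1))⁻¹ * (|t| ^ k / k !) := by rw [mul_inv]; ring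

lemma besselSeries_pos {ν t : ℝ} (hν : 0 ≤ ν) (ht : 0 ≤ t) : 0 < besselSeries ν t :=
  (summable_besselSeries hν t).tsum_pos
    (fun k => mul_nonneg (besselSeriesCoeff_pos (by linarith) k).le (pow_nonneg ht k)) 0
    (by simpa using besselSeriesCoeff_pos (by linarith) 0)

lemma besselSeries_zero (ν : ℝ) : besselSeries ν 0 = (Gamma (ν + 1))⁻¹ := by
  rw [besselSeries, tsum_eq_single 0 fun k hk => by simp [hk]]
  simp [besselSeriesCoeff]

lemma besselI_div_rpow_self (ν : ℝ) {m : ℝ} (hm : 0 < m) :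
    besselI ν m / m ^ ν = besselSeries ν (m ^ 2) / 2 ^ ν := by
  have hterm (k : ℕ) : 1 / (k ! * Gamma (ν + k + 1)) * (m / 2) ^ (2 * (k : ℝ) + ν) =
      (m / 2) ^ ν * (besselSeriesCoeff ν k * (m ^ 2) ^ k) := by
    rw [add_comm (2 * (k : ℝ)), rpow_add (by positivity),
      show 2 * (k : ℝ) = ((2 * k : ℕ) : ℝ) by push_cast; rfl, rpow_natCast,
      div_pow, besselSeriesCoeff, show (4 : ℝ) = 2 ^ 2 by norm_num, ← pow_mul]
    ring
  rw [besselI, tsum_congr hterm, tsum_mul_left, besselSeries, div_rpow hm.le zero_le_two]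
  have : 0 < m ^ ν := rpow_pos_of_pos hm ν
  field_simp

lemma hasSum_cosh_sq (x : ℝ) : HasSum (fun k => ((2 * k)! : ℝ)⁻¹ * (x ^ 2) ^ k) (cosh x) := by
  convert Real.hasSum_cosh x using 2 with k
  rw [← pow_mul, inv_mul_eq_div]

lemma antitone_besselSeriesCoeff_div {ν : ℝ} (hν : -1 / 2 ≤ ν) :
    Antitone fun k => besselSeriesCoeff ν k / ((2 * k)! : ℝ)⁻¹ := by
  refine antitone_nat_of_succ_le fun k => ?_
  have hk : (0 : ℝ) ≤ k := k.cast_nonneg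
  have hpos : 0 < besselSeriesCoeff ν k * (2 * k)! :=
    mul_pos (besselSeriesCoeff_pos (by linarith) k) (by positivity)
  simp only [div_inv_eq_mul, besselSeriesCoeff_succ (by linarith : -1 < ν),
    show 2 * (k + 1) = 2 * k + 1 + 1 by ring, Nat.factorial_succ]
  push_cast
  have hden : 0 < 4 * ((k : ℝ) + 1) * (ν + k + 1) := by nlinarith
  rw [div_mul_eq_mul_div, div_le_iff₀ hden]
  -- consecutive ratios differ by the factor (2k + 1) / (2 (ν + k + 1)) ≤ 1
  calc besselSeriesCoeff ν k * ((2 * k + 1 + 1) * ((2 * k + 1) * (2 * k)!))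
      = besselSeriesCoeff ν k * (2 * k)! * ((2 * k + 2) * (2 * k + 1)) := by ring
    _ ≤ besselSeriesCoeff ν k * (2 * k)! * (4 * (k + 1) * (ν + k + 1)) :=
        mul_le_mul_of_nonneg_left (by nlinarith) hpos.le

lemma besselSeries_sq_mul_cosh_le {ν a b : ℝ} (hν : 0 ≤ ν) (ha : 0 ≤ a) (hab : a ≤ b) :
    besselSeries ν (b ^ 2) * cosh a ≤ besselSeries ν (a ^ 2) * cosh b := by
  rw [(hasSum_cosh_sq a).tsum_eq.symm, (hasSum_cosh_sq b).tsum_eq.symm]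
  exact tsum_mul_pow_mul_tsum_le_of_antitone_div
    (fun k => (besselSeriesCoeff_pos (by linarith) k).le) (fun k => by positivity)
    (antitone_besselSeriesCoeff_div (by linarith)) (sq_nonneg a) (pow_le_pow_left₀ ha hab 2)
    (summable_besselSeries hν _) (hasSum_cosh_sq b).summable

lemma cosh_lt_cosh_mul_exp_sub {a b : ℝ} (hab : a < b) : cosh b < cosh a * exp (b - a) := by
  have h : exp (-b) < exp (b - a - a) := exp_lt_exp.2 (by linarith)
  rw [cosh_eq, cosh_eq, div_mul_eq_mul_div, add_mul, ← exp_add, ← exp_add]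
  ring_nf at h ⊢
  linarith

lemma log_besselSeries_sq_sub_lt {ν a b : ℝ} (hν : 0 ≤ ν) (ha : 0 ≤ a) (hab : a < b) :
    log (besselSeries ν (b ^ 2)) - log (besselSeries ν (a ^ 2)) < b - a := by
  have hA := besselSeries_pos hν (sq_nonneg a)
  have hB := besselSeries_pos hν (sq_nonneg b)
  have hlt : besselSeries ν (b ^ 2) < besselSeries ν (a ^ 2) * exp (b - a) := by
    refine lt_of_mul_lt_mul_right ?_ (cosh_pos a).le
    calc besselSeries ν (b ^ 2) * cosh a ≤ besselSeries ν (a ^ 2) * cosh b :=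
          besselSeries_sq_mul_cosh_le hν ha hab.le
      _ < besselSeries ν (a ^ 2) * (cosh a * exp (b - a)) := by
          gcongr; exact cosh_lt_cosh_mul_exp_sub hab
      _ = besselSeries ν (a ^ 2) * exp (b - a) * cosh a := by ring
  have := log_lt_log hB hlt
  rw [log_mul hA.ne' (exp_pos _).ne', log_exp] at this
  linarith

theorem log_besselI_div_rpow_sub_lt {ν a b : ℝ} (hν : 0 < ν) (ha : 0 ≤ a) (hab : a < b) :
    log (besselI ν b / b ^ ν) - log (besselI ν a / a ^ ν) < b - a := by
  have hb : 0 < b := ha.trans_lt hab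
  have h2 : (0 : ℝ) < 2 ^ ν := by positivity
  have hlog (m : ℝ) (hm : 0 < m) :
      log (besselI ν m / m ^ ν) = log (besselSeries ν (m ^ 2)) - ν * log 2 := by
    rw [besselI_div_rpow_self ν hm, log_div (besselSeries_pos hν.le (sq_nonneg m)).ne' h2.ne',
      log_rpow two_pos]
  have hseries := log_besselSeries_sq_sub_lt hν.le ha hab
  rcases ha.eq_or_lt with rfl | ha
  · rw [zero_rpow hν.ne', div_zero, log_zero, sub_zero, hlog b hb]
    rw [show (0 : ℝ) ^ 2 = 0 by norm_num, besselSeries_zero, log_inv] at hseries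
    linarith [neg_mul_log_two_lt_log_Gamma_add_one hν]
  · rw [hlog b hb, hlog a ha]
    linarith

lemma Mfun_nonneg (κ τ w : ℝ) : 0 ≤ Mfun κ τ w := sqrt_nonneg _

lemma Mfun_eq_sqrt (κ τ w : ℝ) : Mfun κ τ w = √((κ + w / τ) ^ 2 + (1 - w ^ 2) / τ ^ 2) := by
  rw [Mfun]
  congr 1
  ring

lemma add_div_le_Mfun (κ τ : ℝ) {w : ℝ} (hw : w ^ 2 ≤ 1) : κ + w / τ ≤ Mfun κ τ w := by
  have := sub_nonneg.2 hw
  rw [Mfun_eq_sqrt]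
  exact le_sqrt_of_sq_le (le_add_of_nonneg_right (by positivity))

lemma Mfun_sq (κ τ : ℝ) {w : ℝ} (hw : w ^ 2 ≤ 1) :
    Mfun κ τ w ^ 2 = κ ^ 2 + 2 * κ * w / τ + 1 / τ ^ 2 := by
  have := sub_nonneg.2 hw
  rw [Mfun_eq_sqrt, sq_sqrt (by positivity)]
  ring

lemma two_mul_le_Mfun_add_Mfun_neg (κ τ : ℝ) {w : ℝ} (hw : w ^ 2 ≤ 1) :
    2 * κ ≤ Mfun κ τ w + Mfun κ τ (-w) := by
  have h₁ := add_div_le_Mfun κ τ hw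
  have h₂ := add_div_le_Mfun κ τ (w := -w) (by rwa [neg_sq])
  rw [neg_div] at h₂
  linarith

lemma Mfun_neg_lt_Mfun {κ τ w : ℝ} (hκ : 0 < κ) (hτ : 0 < τ) (hw : 0 < w) :
    Mfun κ τ (-w) < Mfun κ τ w := by
  refine (sqrt_lt_sqrt_iff_of_pos (by positivity)).2 ?_
  have : 0 < 2 * κ * w / τ := by positivity
  linarith [show 2 * κ * -w / τ = -(2 * κ * w / τ) by ring]

lemma Mfun_sub_Mfun_neg_le {κ τ w : ℝ} (hκ : 0 < κ) (hτ : 0 < τ) (hw0 : 0 < w) (hw1 : w ≤ 1) :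
    Mfun κ τ w - Mfun κ τ (-w) ≤ 2 * w / τ := by
  have hw : w ^ 2 ≤ 1 := by nlinarith
  have hsum := two_mul_le_Mfun_add_Mfun_neg κ τ hw
  have hlt := Mfun_neg_lt_Mfun hκ hτ hw0
  have hdiff : Mfun κ τ w ^ 2 - Mfun κ τ (-w) ^ 2 = 2 * κ * (2 * w / τ) := by
    rw [Mfun_sq κ τ hw, Mfun_sq κ τ (by rwa [neg_sq])]
    ring
  nlinarith

theorem Jfun_lt_Jfun_neg (κ ν τ : ℝ) (hκ : 0 < κ) (hν : 0 < ν) (hτ : 0 < τ)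
    (w : ℝ) (hw0 : 0 < w) (hw1 : w ≤ 1) :
    Jfun κ ν τ w < Jfun κ ν τ (-w) := by
  have hgap := Mfun_sub_Mfun_neg_le hκ hτ hw0 hw1
  have hlog := log_besselI_div_rpow_sub_lt hν (Mfun_nonneg κ τ (-w)) (Mfun_neg_lt_Mfun hκ hτ hw0)
  have hJ : Jfun κ ν τ (-w) - Jfun κ ν τ w = 2 * w / τ -
      (log (besselI ν (Mfun κ τ w) / Mfun κ τ w ^ ν) -
        log (besselI ν (Mfun κ τ (-w)) / Mfun κ τ (-w) ^ ν)) := by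
    unfold Jfun
    ring
  linarith
end
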